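/- arXiv:1907.06786 — 3 statements merged into one kernel-verified Lean document; each statement's English description precedes it below -/
import Mathlib

section
/- Let A ∈ ℝ₊^{m×n}, d ∈ ℝⁿ with d_j > 0, and for each j define β_j = max( max_i a_{ij}, 1/d_j ); assume 0 < β_j < ∞ and let β = min_j β_j, γ = max_j β_j. For any x ∈ {0,1}ⁿ \ {0}, the LP value z*(x) = max{ xᵀu : u ∈ ℝ₊ⁿ, Au ≤ 1_m, u ≤ d } satisfies 1/γ ≤ z*(x) ≤ (m+n)/β. -/
/-!
Every feasible `u` satisfies `u_j β_j ≤ 1`: the maximum defining `β_j` is attained either by an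
entry `a_{ij}`, and then `a_{ij} u_j ≤ (A u)_i ≤ 1`, or by `1 / d_j`, and then `u_j ≤ d_j`.
Hence `xᵀu ≤ n / β`. Conversely `u = e_j / β_j` is feasible for every `j`, and choosing `j` with
`x_j = 1` gives `xᵀu = 1 / β_j ≥ 1 / γ`.
-/

open Finset

variable {ι κ : Type*}

def IsFeasible [Fintype κ] (A : Matrix ι κ ℝ) (d : κ → ℝ) (u : κ → ℝ) : Prop :=
  (∀ j, 0 ≤ u j) ∧ (∀ i, ∑ j, A i j * u j ≤ 1) ∧ ∀ j, u j ≤ d j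

/-- The paper's `β_j`. -/
noncomputable def colBound [Fintype ι] (A : Matrix ι κ ℝ) (d : κ → ℝ)
    (H : (univ : Finset ι).Nonempty) (j : κ) : ℝ :=
  max (univ.sup' H fun i => A i j) (1 / d j)

section colBound

variable [Fintype ι] {A : Matrix ι κ ℝ} {d : κ → ℝ} {H : (univ : Finset ι).Nonempty}

lemma le_colBound (i : ι) (j : κ) : A i j ≤ colBound A d H j :=
  (le_sup' (fun i => A i j) (mem_univ i)).trans (le_max_left _ _)

lemma one_div_le_colBound (j : κ) : 1 / d j ≤ colBound A d H j :=
  le_max_right _ _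

lemma colBound_pos (hd : ∀ j, 0 < d j) (j : κ) : 0 < colBound A d H j :=
  (one_div_pos.2 (hd j)).trans_le (one_div_le_colBound j)

end colBound

namespace IsFeasible

variable [Fintype κ] {A : Matrix ι κ ℝ} {d u : κ → ℝ}

lemma entry_mul_le_one (hA : ∀ i j, 0 ≤ A i j) (hu : IsFeasible A d u) (i : ι) (j : κ) :
    A i j * u j ≤ 1 :=
  (single_le_sum (fun k _ => mul_nonneg (hA i k) (hu.1 k)) (mem_univ j)).trans (hu.2.1 i)

lemma mul_colBound_le_one [Fintype ι] (hA : ∀ i j, 0 ≤ A i j) (hd : ∀ j, 0 < d j)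
    (hu : IsFeasible A d u) (H : (univ : Finset ι).Nonempty) (j : κ) :
    u j * colBound A d H j ≤ 1 := by
  rw [colBound, mul_max_of_nonneg _ _ (hu.1 j)]
  refine max_le ?_ ?_
  · obtain ⟨i, -, hi⟩ := exists_mem_eq_sup' H fun i => A i j
    rw [hi, mul_comm]
    exact hu.entry_mul_le_one hA i j
  · rw [mul_one_div, div_le_one (hd j)]
    exact hu.2.2 j

lemma le_one_div_colBound [Fintype ι] (hA : ∀ i j, 0 ≤ A i j) (hd : ∀ j, 0 < d j)
    (hu : IsFeasible A d u) (H : (univ : Finset ι).Nonempty) (j : κ) :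
    u j ≤ 1 / colBound A d H j := by
  rw [le_div_iff₀ (colBound_pos hd j)]
  exact hu.mul_colBound_le_one hA hd H j

end IsFeasible

lemma sum_mul_pi_single [Fintype κ] [DecidableEq κ] (a : κ → ℝ) (j₀ : κ) (c : ℝ) :
    ∑ j, a j * (Pi.single j₀ c : κ → ℝ) j = a j₀ * c := by
  simp [Pi.single_apply, mul_ite]

lemma sum_mul_le_card_mul [Fintype κ] {x u : κ → ℝ} {c : ℝ} (hx : ∀ j, x j ≤ 1)
    (hu₀ : ∀ j, 0 ≤ u j) (huc : ∀ j, u j ≤ c) : ∑ j, x j * u j ≤ Fintype.card κ * c :=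
  calc ∑ j, x j * u j ≤ ∑ _j : κ, c :=
        sum_le_sum fun j _ => (mul_le_of_le_one_left (hu₀ j) (hx j)).trans (huc j)
    _ = Fintype.card κ * c := by rw [sum_const, card_univ, nsmul_eq_mul]

lemma isFeasible_pi_single_one_div_colBound [Fintype ι] [Fintype κ] [DecidableEq κ]
    {A : Matrix ι κ ℝ} {d : κ → ℝ} (hd : ∀ j, 0 < d j) (H : (univ : Finset ι).Nonempty) (j₀ : κ) :
    IsFeasible A d (Pi.single j₀ (1 / colBound A d H j₀)) := by
  have hpos := colBound_pos (A := A) (H := H) hd j₀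
  refine ⟨fun j => ?_, fun i => ?_, fun j => ?_⟩
  · exact (Pi.single_nonneg.2 (one_div_pos.2 hpos).le : (0 : κ → ℝ) ≤ _) j
  · rw [sum_mul_pi_single, mul_one_div, div_le_one hpos]
    exact le_colBound i j₀
  · rcases eq_or_ne j j₀ with rfl | h
    · rw [Pi.single_eq_same, one_div_le hpos (hd j)]
      exact one_div_le_colBound j
    · simpa [h] using (hd j).le

/-- Bounds on the LP value z*(x) = max{xᵀu : u ≥ 0, Au ≤ 1_m, u ≤ d} for binary
nonzero x: every feasible u has xᵀu ≤ (m+n)/β, and some feasible u has xᵀu ≥ 1/γ,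
where β = min_j β_j, γ = max_j β_j and β_j = max(max_i a_{ij}, 1/d_j). -/
theorem stmt_4 {m n : ℕ} (hm : 0 < m) (hn : 0 < n)
    (A : Matrix (Fin m) (Fin n) ℝ) (hA : ∀ i j, 0 ≤ A i j)
    (d : Fin n → ℝ) (hd : ∀ j, 0 < d j)
    (x : Fin n → ℝ) (hx : ∀ j, x j = 0 ∨ x j = 1) (hx0 : x ≠ 0)
    (βj : Fin n → ℝ)
    (hβj : ∀ j, βj j =
      max (Finset.univ.sup' ⟨⟨0, hm⟩, Finset.mem_univ _⟩ fun i => A i j) (1 / d j))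
    (β γ : ℝ)
    (hβ : β = Finset.univ.inf' ⟨⟨0, hn⟩, Finset.mem_univ _⟩ βj)
    (hγ : γ = Finset.univ.sup' ⟨⟨0, hn⟩, Finset.mem_univ _⟩ βj) :
    (∀ u : Fin n → ℝ, (∀ j, 0 ≤ u j) → (∀ i, ∑ j, A i j * u j ≤ 1) →
      (∀ j, u j ≤ d j) → ∑ j, x j * u j ≤ (m + n) / β) ∧
    (∃ u : Fin n → ℝ, (∀ j, 0 ≤ u j) ∧ (∀ i, ∑ j, A i j * u j ≤ 1) ∧
      (∀ j, u j ≤ d j) ∧ 1 / γ ≤ ∑ j, x j * u j) := by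
  have H : (univ : Finset (Fin m)).Nonempty := ⟨⟨0, hm⟩, mem_univ _⟩
  obtain rfl : βj = colBound A d H := funext hβj
  have hβpos : 0 < β := hβ ▸ (lt_inf'_iff _).2 fun j _ => colBound_pos hd j
  refine ⟨fun u hu₀ hAu hud => ?_, ?_⟩
  · have hu : IsFeasible A d u := ⟨hu₀, hAu, hud⟩
    have hu_le : ∀ j, u j ≤ 1 / β := fun j => (hu.le_one_div_colBound hA hd H j).trans <|
      one_div_le_one_div_of_le hβpos (hβ ▸ inf'_le _ (mem_univ j))
    calc ∑ j, x j * u j ≤ n * (1 / β) := by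
          simpa using
            sum_mul_le_card_mul (fun j => by rcases hx j with h | h <;> simp [h]) hu₀ hu_le
      _ ≤ (m + n) / β := by
          rw [mul_one_div]
          gcongr
          exact le_add_of_nonneg_left m.cast_nonneg
  · obtain ⟨j₀, hj₀⟩ := Function.ne_iff.1 hx0
    obtain ⟨hu₀, hAu, hud⟩ := isFeasible_pi_single_one_div_colBound (A := A) hd H j₀
    refine ⟨_, hu₀, hAu, hud, ?_⟩
    rw [sum_mul_pi_single, (hx j₀).resolve_left hj₀, one_mul]
    exact one_div_le_one_div_of_le (colBound_pos hd j₀) (hγ ▸ le_sup' _ (mem_univ j₀))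
end

section
/- Let A ∈ ℝ₊^{m×n} with columns a^j, x* ∈ ℝ₊ⁿ, θ* ∈ ℝ₊^m satisfying Aᵀθ* ≥ x*, and τ ∈ (0,1). Let J = { j : x*_j ≥ τ }, let x ∈ {0,1}ⁿ, and let β > 0 be such that max_i a_{ij} ≥ β for all j. Define x̂ by x̂_j = 1 for j ∈ J and x̂_j = x_j otherwise, and define θ̂_i = (1/τ)θ*_i + (1/β)Σ_{j∉J, i=i(j)} x_j, where i(j) is the smallest index i maximizing a_{ij}. Then Aᵀθ̂ ≥ x̂ componentwise. -/
/-- Dual-fitting feasibility (Claim 6, covering reduction): with J = {j : x*_j ≥ τ},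
x̂_j = 1 for j ∈ J and x̂_j = x_j otherwise, and
θ̂_i = (1/τ)θ*_i + (1/β)Σ_{j∉J, i(j)=i} x_j, we have Aᵀθ̂ ≥ x̂ componentwise. -/
theorem stmt_9 {m n : ℕ} (A : Matrix (Fin m) (Fin n) ℝ) (hA : ∀ i j, 0 ≤ A i j)
    (xs : Fin n → ℝ) (hxs : ∀ j, 0 ≤ xs j)
    (θs : Fin m → ℝ) (hθs : ∀ i, 0 ≤ θs i)
    (hfeas : ∀ j, xs j ≤ ∑ i, A i j * θs i)
    (τ β : ℝ) (hτ0 : 0 < τ) (hτ1 : τ < 1) (hβ : 0 < β)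
    (x : Fin n → ℝ) (hx : ∀ j, x j = 0 ∨ x j = 1)
    (io : Fin n → Fin m) (hio : ∀ j i, A i j ≤ A (io j) j) (hioβ : ∀ j, β ≤ A (io j) j)
    (J : Finset (Fin n)) (hJ : J = Finset.univ.filter fun j => τ ≤ xs j)
    (xhat : Fin n → ℝ) (hxhat : ∀ j, xhat j = if j ∈ J then 1 else x j)
    (θhat : Fin m → ℝ)
    (hθhat : ∀ i, θhat i =
      θs i / τ + (1 / β) * ∑ j ∈ Finset.univ \ J, if io j = i then x j else 0) :
    ∀ j, xhat j ≤ ∑ i, A i j * θhat i := by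
  intro j
  set S : Fin m → ℝ := fun i => ∑ j' ∈ Finset.univ \ J, if io j' = i then x j' else 0
    with hS
  have hx0 : ∀ j', 0 ≤ x j' := fun j' => by rcases hx j' with h | h <;> simp [h]
  have hS0 : ∀ i, 0 ≤ S i := fun i =>
    Finset.sum_nonneg fun j' _ => by split <;> [exact hx0 j'; exact le_rfl]
  have hsplit : ∑ i, A i j * θhat i
      = (∑ i, A i j * θs i) / τ + ∑ i, A i j * ((1 / β) * S i) := by
    rw [Finset.sum_div, ← Finset.sum_add_distrib]
    refine Finset.sum_congr rfl fun i _ => ?_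
    rw [hθhat i, mul_add, mul_div_assoc]
  rw [hsplit, hxhat j]
  have h2nn : ∀ i ∈ (Finset.univ : Finset (Fin m)), 0 ≤ A i j * ((1 / β) * S i) :=
    fun i _ => by have := hA i j; have := hS0 i; positivity
  by_cases hjJ : j ∈ J
  · simp only [hjJ, if_pos]
    have hτ : τ ≤ xs j := by
      rw [hJ] at hjJ; simpa using hjJ
    have h1 : (1 : ℝ) ≤ (∑ i, A i j * θs i) / τ := by
      rw [le_div_iff₀ hτ0]
      calc (1:ℝ) * τ = τ := one_mul τ
        _ ≤ xs j := hτ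
        _ ≤ _ := hfeas j
    have h2 : (0:ℝ) ≤ ∑ i, A i j * ((1 / β) * S i) := Finset.sum_nonneg h2nn
    linarith
  · simp only [hjJ, if_neg, not_false_iff]
    rcases hx j with h0 | h1
    · rw [h0]
      have h1' : (0:ℝ) ≤ (∑ i, A i j * θs i) / τ := by
        have : 0 ≤ ∑ i, A i j * θs i :=
          Finset.sum_nonneg fun i _ => mul_nonneg (hA i j) (hθs i)
        positivity
      have h2 : (0:ℝ) ≤ ∑ i, A i j * ((1 / β) * S i) := Finset.sum_nonneg h2nn
      linarith
    · have hjmem : j ∈ Finset.univ \ J := by simp [hjJ]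
      have hSio : x j ≤ S (io j) := by
        have := Finset.single_le_sum
          (f := fun j' => if io j' = io j then x j' else 0)
          (fun j' _ => by split <;> [exact hx0 j'; exact le_rfl]) hjmem
        rw [hS]; simpa only [if_pos rfl, if_true] using this
      have hterm : (1:ℝ) ≤ A (io j) j * ((1 / β) * S (io j)) := by
        have hS1 : (1:ℝ) ≤ S (io j) := h1 ▸ hSio
        have hb : β * ((1 / β) * 1) = 1 := by field_simp
        calc (1:ℝ) = β * ((1 / β) * 1) := hb.symm
          _ ≤ A (io j) j * ((1 / β) * S (io j)) := by
              apply mul_le_mul (hioβ j)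
              · apply mul_le_mul_of_nonneg_left hS1; positivity
              · positivity
              · exact hA (io j) j
      have hsum : A (io j) j * ((1 / β) * S (io j)) ≤ ∑ i, A i j * ((1 / β) * S i) :=
        Finset.single_le_sum h2nn (Finset.mem_univ (io j))
      have h1' : (0:ℝ) ≤ (∑ i, A i j * θs i) / τ := by
        have : 0 ≤ ∑ i, A i j * θs i :=
          Finset.sum_nonneg fun i _ => mul_nonneg (hA i j) (hθs i)
        positivity
      rw [h1]
      linarith
end

section
/- Let w ∈ [0,1]ⁿ and let x̂ ∈ {0,1}ⁿ be a random binary vector whose coordinates are semi-negatively correlated, i.e., Pr[∧_{i∈S}(x̂_i = 1)] ≤ ∏_{i∈S} Pr[x̂_i = 1] for all S ⊆ [n], and suppose E[wᵀx̂] ≤ μ. Then for any ρ ≥ 1, Pr[ wᵀx̂ ≥ (1+ρ)μ ] ≤ e^{−μρ/3}. -/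
open MeasureTheory

/-- Numeric inequality: for `ρ ≥ 1`, `4ρ/3 ≤ (1+ρ) log (1+ρ)`. -/
lemma stmt_16_num {ρ : ℝ} (hρ : 1 ≤ ρ) : 4 * ρ / 3 ≤ (1 + ρ) * Real.log (1 + ρ) := by
  have h2 : (0:ℝ) < 1 + ρ := by linarith
  have hx : (0:ℝ) < (1 + ρ) / 2 := by linarith
  have hlog : Real.log (1 + ρ) = Real.log 2 + Real.log ((1 + ρ) / 2) := by
    rw [← Real.log_mul (by norm_num) (by positivity)]
    ring_nf
  have h1 : 1 - ((1 + ρ) / 2)⁻¹ ≤ Real.log ((1 + ρ) / 2) :=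
    Real.one_sub_inv_le_log_of_pos hx
  have hinv : ((1 + ρ) / 2)⁻¹ = 2 / (1 + ρ) := by
    field_simp
  rw [hinv] at h1
  have hl2 : (0.6931471803 : ℝ) < Real.log 2 := Real.log_two_gt_d9
  have h3 : (ρ - 1) / (1 + ρ) ≤ Real.log ((1 + ρ) / 2) := by
    have : 1 - 2 / (1 + ρ) = (ρ - 1) / (1 + ρ) := by field_simp; ring
    linarith [this ▸ h1]
  have h4 : (1 + ρ) * ((ρ - 1) / (1 + ρ)) = ρ - 1 := by field_simp
  have h5 : (1 + ρ) * Real.log (1 + ρ) ≥ (1 + ρ) * Real.log 2 + (ρ - 1) := by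
    rw [hlog, mul_add]
    have := mul_le_mul_of_nonneg_left h3 (le_of_lt h2)
    rw [h4] at this
    linarith
  nlinarith

/-- Panconesi–Srinivasan Chernoff bound for semi-negatively correlated 0/1 variables:
if w ∈ [0,1]ⁿ, x̂ ∈ {0,1}ⁿ random with Pr[∧_{i∈S} x̂_i = 1] ≤ ∏_{i∈S} Pr[x̂_i = 1]
for all S, and E[wᵀx̂] ≤ μ₀, then for ρ ≥ 1, Pr[wᵀx̂ ≥ (1+ρ)μ₀] ≤ e^{−μ₀ρ/3}. -/
theorem stmt_16 {Ω : Type*} [MeasurableSpace Ω] (μ : Measure Ω) [IsProbabilityMeasure μ]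
    {n : ℕ} (w : Fin n → ℝ) (hw : ∀ i, 0 ≤ w i ∧ w i ≤ 1)
    (xhat : Ω → Fin n → ℝ) (hmeas : ∀ i, Measurable fun ω => xhat ω i)
    (hbin : ∀ ω i, xhat ω i = 0 ∨ xhat ω i = 1)
    (hnc : ∀ S : Finset (Fin n),
      μ {ω | ∀ i ∈ S, xhat ω i = 1} ≤ ∏ i ∈ S, μ {ω | xhat ω i = 1})
    (μ0 : ℝ) (hE : ∫ ω, (∑ i, w i * xhat ω i) ∂μ ≤ μ0)
    (ρ : ℝ) (hρ : 1 ≤ ρ) :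
    μ {ω | (1 + ρ) * μ0 ≤ ∑ i, w i * xhat ω i} ≤
      ENNReal.ofReal (Real.exp (-(μ0 * ρ) / 3)) := by
  classical
  have h1ρ : (0:ℝ) < 1 + ρ := by linarith
  set t : ℝ := Real.log (1 + ρ) with ht
  have het : Real.exp t = 1 + ρ := Real.exp_log h1ρ
  have ht0 : 0 < t := Real.log_pos (by linarith)
  set X : Ω → ℝ := fun ω => ∑ i, w i * xhat ω i with hX
  set c : Fin n → ℝ := fun i => Real.exp (t * w i) - 1 with hc
  have hc0 : ∀ i, 0 ≤ c i := fun i => by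
    have : Real.exp 0 ≤ Real.exp (t * w i) :=
      Real.exp_le_exp.2 (mul_nonneg ht0.le (hw i).1)
    simpa [hc, Real.exp_zero] using this
  -- events
  set A : Finset (Fin n) → Set Ω := fun S => {ω | ∀ i ∈ S, xhat ω i = 1} with hA
  have hAmeas : ∀ S, MeasurableSet (A S) := by
    intro S
    have : A S = ⋂ i ∈ S, {ω | xhat ω i = 1} := by
      ext ω; simp [hA, Set.mem_iInter]
    rw [this]
    exact MeasurableSet.biInter S.countable_toSet fun i _ =>
      (hmeas i) (measurableSet_singleton 1)
  -- product of xhat over S is the indicator of A S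
  have hprod_ind : ∀ (S : Finset (Fin n)) (ω : Ω),
      (∏ i ∈ S, xhat ω i) = (A S).indicator (fun _ => (1:ℝ)) ω := by
    intro S ω
    by_cases h : ω ∈ A S
    · rw [Set.indicator_of_mem h]
      exact Finset.prod_eq_one fun i hi => h i hi
    · rw [Set.indicator_of_notMem h]
      simp only [hA, Set.mem_setOf_eq, not_forall] at h
      obtain ⟨i, hi, hne⟩ := h
      have h0 : xhat ω i = 0 := (hbin ω i).resolve_right hne
      exact Finset.prod_eq_zero hi h0
  -- pointwise identity for the mgf integrand
  have hpt : ∀ ω, Real.exp (t * X ω)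
      = ∑ S ∈ (Finset.univ : Finset (Fin n)).powerset,
          (∏ i ∈ S, c i) * (A S).indicator (fun _ => (1:ℝ)) ω := by
    intro ω
    have h1 : Real.exp (t * X ω) = ∏ i, (c i * xhat ω i + 1) := by
      rw [hX, Finset.mul_sum, Real.exp_sum]
      refine Finset.prod_congr rfl fun i _ => ?_
      rcases hbin ω i with h | h <;> simp [h, hc, mul_assoc]
    rw [h1, Finset.prod_add]
    refine Finset.sum_congr rfl fun S _ => ?_
    rw [Finset.prod_const_one, mul_one, Finset.prod_mul_distrib, hprod_ind S ω]
  have hfun : (fun ω => Real.exp (t * X ω))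
      = fun ω => ∑ S ∈ (Finset.univ : Finset (Fin n)).powerset,
          (∏ i ∈ S, c i) * (A S).indicator (fun _ => (1:ℝ)) ω := funext hpt
  -- integrability
  have hint : Integrable (fun ω => Real.exp (t * X ω)) μ := by
    rw [hfun]
    exact integrable_finset_sum _ fun S _ =>
      (((integrable_const (1:ℝ)).indicator (hAmeas S)).const_mul _)
  -- compute the integral of the mgf
  have hIeq : ∫ ω, Real.exp (t * X ω) ∂μ
      = ∑ S ∈ (Finset.univ : Finset (Fin n)).powerset,
          (∏ i ∈ S, c i) * (μ (A S)).toReal := by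
    rw [hfun, integral_finset_sum _ fun S _ =>
      (((integrable_const (1:ℝ)).indicator (hAmeas S)).const_mul _)]
    refine Finset.sum_congr rfl fun S _ => ?_
    rw [integral_const_mul, integral_indicator_const _ (hAmeas S)]
    simp [Measure.real]
  -- probabilities
  set p : Fin n → ℝ := fun i => (μ {ω | xhat ω i = 1}).toReal with hp
  have hp0 : ∀ i, 0 ≤ p i := fun i => ENNReal.toReal_nonneg
  have hp1 : ∀ i, p i ≤ 1 := fun i => by
    have := prob_le_one (μ := μ) (s := {ω | xhat ω i = 1})
    simpa [hp] using ENNReal.toReal_mono (by simp) this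
  -- negative correlation in real form
  have hncR : ∀ S : Finset (Fin n), (μ (A S)).toReal ≤ ∏ i ∈ S, p i := by
    intro S
    have h := hnc S
    have hfin : (∏ i ∈ S, μ {ω | xhat ω i = 1}) ≠ ⊤ := by
      refine (lt_of_le_of_lt (Finset.prod_le_prod' (fun i _ => prob_le_one)) ?_).ne
      simp
    calc (μ (A S)).toReal ≤ (∏ i ∈ S, μ {ω | xhat ω i = 1}).toReal :=
          ENNReal.toReal_mono hfin h
      _ = ∏ i ∈ S, p i := by rw [ENNReal.toReal_prod]
  -- bound the mgf
  have hmgf : ∫ ω, Real.exp (t * X ω) ∂μ ≤ Real.exp (∑ i, c i * p i) := by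
    rw [hIeq]
    calc ∑ S ∈ (Finset.univ : Finset (Fin n)).powerset,
          (∏ i ∈ S, c i) * (μ (A S)).toReal
        ≤ ∑ S ∈ (Finset.univ : Finset (Fin n)).powerset,
          (∏ i ∈ S, c i) * ∏ i ∈ S, p i := by
          refine Finset.sum_le_sum fun S _ => ?_
          exact mul_le_mul_of_nonneg_left (hncR S)
            (Finset.prod_nonneg fun i _ => hc0 i)
      _ = ∏ i, (c i * p i + 1) := by
          rw [Finset.prod_add]
          refine Finset.sum_congr rfl fun S _ => ?_
          rw [Finset.prod_const_one, mul_one, Finset.prod_mul_distrib]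
      _ ≤ ∏ i, Real.exp (c i * p i) := by
          refine Finset.prod_le_prod (fun i _ => by nlinarith [hc0 i, hp0 i]) ?_
          intro i _
          have := Real.add_one_le_exp (c i * p i)
          linarith
      _ = Real.exp (∑ i, c i * p i) := (Real.exp_sum _ _).symm
  -- convexity bound: c i ≤ w i * ρ
  have hcw : ∀ i, c i ≤ w i * ρ := by
    intro i
    obtain ⟨hw0, hw1⟩ := hw i
    have hconv := convexOn_exp.2 (Set.mem_univ t) (Set.mem_univ 0) hw0
      (by linarith : (0:ℝ) ≤ 1 - w i) (by ring)
    simp only [smul_eq_mul, mul_zero, add_zero, Real.exp_zero, mul_one] at hconv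
    have : Real.exp (w i * t) ≤ w i * Real.exp t + (1 - w i) := hconv
    rw [het] at this
    have : Real.exp (t * w i) ≤ w i * (1 + ρ) + (1 - w i) := by
      rwa [mul_comm t (w i)]
    simp only [hc]
    nlinarith
  -- E[X] = ∑ w i * p i and is ≤ μ0, nonneg
  have hxint : ∀ i, Integrable (fun ω => xhat ω i) μ := by
    intro i
    have heq : (fun ω => xhat ω i)
        = ({ω | xhat ω i = 1} : Set Ω).indicator (fun _ => (1:ℝ)) := by
      funext ω
      rcases hbin ω i with h | h
      · rw [h, Set.indicator_of_notMem (by simp [Set.mem_setOf_eq, h])]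
      · rw [h, Set.indicator_of_mem (by simp [Set.mem_setOf_eq, h])]
    rw [heq]
    exact (integrable_const (1:ℝ)).indicator ((hmeas i) (measurableSet_singleton 1))
  have hEX : ∫ ω, X ω ∂μ = ∑ i, w i * p i := by
    rw [hX]
    rw [integral_finset_sum _ fun i _ => (hxint i).const_mul _]
    refine Finset.sum_congr rfl fun i _ => ?_
    rw [integral_const_mul]
    congr 1
    have heq : (fun ω => xhat ω i)
        = ({ω | xhat ω i = 1} : Set Ω).indicator (fun _ => (1:ℝ)) := by
      funext ω
      rcases hbin ω i with h | h
      · rw [h, Set.indicator_of_notMem (by simp [Set.mem_setOf_eq, h])]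
      · rw [h, Set.indicator_of_mem (by simp [Set.mem_setOf_eq, h])]
    rw [heq, integral_indicator_const _ (show MeasurableSet {ω | xhat ω i = 1} from (hmeas i) (measurableSet_singleton 1))]
    simp [hp, Measure.real]
  have hwp : ∑ i, w i * p i ≤ μ0 := by rw [← hEX]; exact hE
  have hwp0 : 0 ≤ ∑ i, w i * p i :=
    Finset.sum_nonneg fun i _ => mul_nonneg (hw i).1 (hp0 i)
  have hμ00 : 0 ≤ μ0 := le_trans hwp0 hwp
  -- ∑ c i * p i ≤ ρ * μ0
  have hsum : ∑ i, c i * p i ≤ ρ * μ0 := by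
    calc ∑ i, c i * p i ≤ ∑ i, (w i * ρ) * p i :=
          Finset.sum_le_sum fun i _ => mul_le_mul_of_nonneg_right (hcw i) (hp0 i)
      _ = ρ * ∑ i, w i * p i := by rw [Finset.mul_sum]; exact Finset.sum_congr rfl fun i _ => by ring
      _ ≤ ρ * μ0 := mul_le_mul_of_nonneg_left hwp (by linarith)
  have hmgf2 : ∫ ω, Real.exp (t * X ω) ∂μ ≤ Real.exp (ρ * μ0) :=
    le_trans hmgf (Real.exp_le_exp.2 hsum)
  -- Markov
  have hsets : {ω | Real.exp (t * ((1 + ρ) * μ0)) ≤ Real.exp (t * X ω)}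
      = {ω | (1 + ρ) * μ0 ≤ X ω} := by
    ext ω
    simp only [Set.mem_setOf_eq, Real.exp_le_exp]
    exact ⟨fun h => le_of_mul_le_mul_left h ht0,
      fun h => mul_le_mul_of_nonneg_left h ht0.le⟩
  have hmarkov := mul_meas_ge_le_integral_of_nonneg
    (f := fun ω => Real.exp (t * X ω))
    (Filter.Eventually.of_forall fun ω => (Real.exp_pos _).le) hint
    (Real.exp (t * ((1 + ρ) * μ0)))
  rw [hsets] at hmarkov
  have hkey : (μ {ω | (1 + ρ) * μ0 ≤ X ω}).toReal ≤ Real.exp (-(μ0 * ρ) / 3) := by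
    have hepos : 0 < Real.exp (t * ((1 + ρ) * μ0)) := Real.exp_pos _
    have h1 : (μ {ω | (1 + ρ) * μ0 ≤ X ω}).toReal
        ≤ Real.exp (ρ * μ0) / Real.exp (t * ((1 + ρ) * μ0)) := by
      rw [le_div_iff₀ hepos]
      calc (μ {ω | (1 + ρ) * μ0 ≤ X ω}).toReal * Real.exp (t * ((1 + ρ) * μ0))
          = Real.exp (t * ((1 + ρ) * μ0)) * (μ {ω | (1 + ρ) * μ0 ≤ X ω}).toReal := by ring
        _ ≤ ∫ ω, Real.exp (t * X ω) ∂μ := hmarkov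
        _ ≤ Real.exp (ρ * μ0) := hmgf2
    have h2 : Real.exp (ρ * μ0) / Real.exp (t * ((1 + ρ) * μ0))
        = Real.exp (ρ * μ0 - t * ((1 + ρ) * μ0)) := by rw [Real.exp_sub]
    have h3 : ρ * μ0 - t * ((1 + ρ) * μ0) ≤ -(μ0 * ρ) / 3 := by
      have hnum := stmt_16_num hρ
      nlinarith [mul_le_mul_of_nonneg_left hnum hμ00]
    calc (μ {ω | (1 + ρ) * μ0 ≤ X ω}).toReal
        ≤ Real.exp (ρ * μ0 - t * ((1 + ρ) * μ0)) := h2 ▸ h1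
      _ ≤ Real.exp (-(μ0 * ρ) / 3) := Real.exp_le_exp.2 h3
  have hfin : μ {ω | (1 + ρ) * μ0 ≤ X ω} ≠ ⊤ := measure_ne_top μ _
  calc μ {ω | (1 + ρ) * μ0 ≤ ∑ i, w i * xhat ω i}
      = ENNReal.ofReal (μ {ω | (1 + ρ) * μ0 ≤ X ω}).toReal := by
        rw [ENNReal.ofReal_toReal hfin]
    _ ≤ ENNReal.ofReal (Real.exp (-(μ0 * ρ) / 3)) := ENNReal.ofReal_le_ofReal hkey
end
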